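/- arXiv:1607.04864 — 2 statements merged into one kernel-verified Lean document; each statement's English description precedes it below -/
import Mathlib

section
/- Let ν be a Borel σ-finite measure on ℝ such that Z(x) = ∫ g(z−x) dν(z) is finite for all x, where g is the standard Gaussian density. Define G(x,y) = (∫_{(−∞,y]} g(z−x) dν(z)) / Z(x). Then G(x,y) is nondecreasing in y, and if ν((y,∞)) > 0 and ν((−∞,y]) > 0, then G(x,y) is strictly decreasing in x. -/
/-!
Split `ν` at `y` into its parts `A(x)` on `(-∞, y]` and `B(x)` on `(y, ∞)`, so that
`G(x, y) = A(x) / (A(x) + B(x))`. The Gaussian kernel is strictly totally positive of order two: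
`log gauss (z - x)` has mixed term `z x`, so `gauss (z - x') gauss (w - x) < gauss (z - x) gauss (w - x')`
for `z < w` and `x < x'`. Integrating this over `z ≤ y < w` gives `A(x') B(x) < A(x) B(x')`, which is
the strict decrease of `A / (A + B)`.
-/

open MeasureTheory Set

noncomputable def gauss (u : ℝ) : ℝ := (Real.sqrt (2 * Real.pi))⁻¹ * Real.exp (-u ^ 2 / 2)

lemma gauss_pos (u : ℝ) : 0 < gauss u := by
  unfold gauss
  positivity

lemma gauss_sub_mul_gauss_sub_lt {z w x x' : ℝ} (hzw : z < w) (hxx' : x < x') :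
    gauss (z - x') * gauss (w - x) < gauss (z - x) * gauss (w - x') := by
  unfold gauss
  rw [mul_mul_mul_comm, mul_mul_mul_comm _ (Real.exp _), ← Real.exp_add, ← Real.exp_add]
  refine mul_lt_mul_of_pos_left (Real.exp_lt_exp.2 ?_) (by positivity)
  nlinarith [mul_pos (sub_pos.2 hzw) (sub_pos.2 hxx')]

section StrictIntegralInequalities

variable {α β : Type*} [MeasurableSpace α] [MeasurableSpace β] {μ : Measure α} {ν : Measure β}
  {s : Set α} {t : Set β}

lemma setIntegral_lt_setIntegral_of_forall_lt {f g : α → ℝ} (hs : MeasurableSet s) (hμs : μ s ≠ 0)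
    (hf : IntegrableOn f s μ) (hg : IntegrableOn g s μ) (hfg : ∀ x ∈ s, f x < g x) :
    ∫ x in s, f x ∂μ < ∫ x in s, g x ∂μ := by
  rw [← sub_pos, ← integral_sub hg hf]
  refine (setIntegral_pos_iff_support_of_nonneg_ae ?_ (hg.sub hf)).2 ?_
  · filter_upwards [ae_restrict_mem hs] with x hx
    exact sub_nonneg.2 (hfg x hx).le
  · exact (pos_iff_ne_zero.2 hμs).trans_le
      (measure_mono fun x hx => ⟨sub_ne_zero.2 (hfg x hx).ne', hx⟩)

lemma setIntegral_mul_setIntegral_lt_of_forall_mul_lt {f₁ f₂ : α → ℝ} {g₁ g₂ : β → ℝ}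
    (hs : MeasurableSet s) (ht : MeasurableSet t) (hμs : μ s ≠ 0) (hνt : ν t ≠ 0)
    (hf₁ : IntegrableOn f₁ s μ) (hf₂ : IntegrableOn f₂ s μ)
    (hg₁ : IntegrableOn g₁ t ν) (hg₂ : IntegrableOn g₂ t ν)
    (h : ∀ z ∈ s, ∀ w ∈ t, f₁ z * g₁ w < f₂ z * g₂ w) :
    (∫ z in s, f₁ z ∂μ) * (∫ w in t, g₁ w ∂ν) < (∫ z in s, f₂ z ∂μ) * ∫ w in t, g₂ w ∂ν := by
  rw [← integral_mul_const, ← integral_mul_const]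
  refine setIntegral_lt_setIntegral_of_forall_lt hs hμs (hf₁.mul_const _) (hf₂.mul_const _)
    fun z hz => ?_
  rw [← integral_const_mul, ← integral_const_mul]
  exact setIntegral_lt_setIntegral_of_forall_lt ht hνt (hg₁.const_mul _) (hg₂.const_mul _) (h z hz)

end StrictIntegralInequalities

lemma setIntegral_gauss_sub_pos {ν : Measure ℝ} {s : Set ℝ} (hs : MeasurableSet s) (hνs : ν s ≠ 0)
    {x : ℝ} (hx : Integrable (fun z => gauss (z - x)) ν) : 0 < ∫ z in s, gauss (z - x) ∂ν := by
  simpa using setIntegral_lt_setIntegral_of_forall_lt hs hνs integrableOn_zero hx.integrableOn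
    fun z _ => gauss_pos (z - x)

theorem stmt0_general (ν : Measure ℝ)
    (hZ : ∀ x : ℝ, Integrable (fun z => gauss (z - x)) ν) :
    (∀ x : ℝ, Monotone (fun y : ℝ =>
      (∫ z in Iic y, gauss (z - x) ∂ν) / ∫ z, gauss (z - x) ∂ν)) ∧
    (∀ y : ℝ, 0 < ν (Ioi y) → 0 < ν (Iic y) →
      StrictAnti (fun x : ℝ =>
        (∫ z in Iic y, gauss (z - x) ∂ν) / ∫ z, gauss (z - x) ∂ν)) := by
  refine ⟨fun x y₁ y₂ hy => ?_, fun y hIoi hIic x x' hxx' => ?_⟩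
  · dsimp only
    have hZ_nonneg : 0 ≤ ∫ z, gauss (z - x) ∂ν := integral_nonneg fun z => (gauss_pos _).le
    gcongr
    · exact ae_of_all _ fun z => (gauss_pos _).le
    · exact (hZ x).integrableOn
  set A : ℝ → ℝ := fun t => ∫ z in Iic y, gauss (z - t) ∂ν
  set B : ℝ → ℝ := fun t => ∫ z in Ioi y, gauss (z - t) ∂ν
  have hsplit (t : ℝ) : ∫ z, gauss (z - t) ∂ν = A t + B t := by
    rw [← integral_add_compl measurableSet_Iic (hZ t), compl_Iic]
  have hA (t : ℝ) : 0 < A t := setIntegral_gauss_sub_pos measurableSet_Iic hIic.ne' (hZ t)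
  have hB (t : ℝ) : 0 < B t := setIntegral_gauss_sub_pos measurableSet_Ioi hIoi.ne' (hZ t)
  have hcross : A x' * B x < A x * B x' :=
    setIntegral_mul_setIntegral_lt_of_forall_mul_lt measurableSet_Iic measurableSet_Ioi
      hIic.ne' hIoi.ne' (hZ x').integrableOn (hZ x).integrableOn (hZ x).integrableOn
      (hZ x').integrableOn fun z hz w hw => gauss_sub_mul_gauss_sub_lt (lt_of_le_of_lt hz hw) hxx'
  show A x' / _ < A x / _
  rw [hsplit, hsplit, div_lt_div_iff₀ (add_pos (hA x') (hB x')) (add_pos (hA x) (hB x))]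
  linarith

theorem stmt0 (ν : Measure ℝ) [SigmaFinite ν]
    (hZ : ∀ x : ℝ, Integrable (fun z => gauss (z - x)) ν) :
    (∀ x : ℝ, Monotone (fun y : ℝ =>
      (∫ z in Iic y, gauss (z - x) ∂ν) / ∫ z, gauss (z - x) ∂ν)) ∧
    (∀ y : ℝ, 0 < ν (Ioi y) → 0 < ν (Iic y) →
      StrictAnti (fun x : ℝ =>
        (∫ z in Iic y, gauss (z - x) ∂ν) / ∫ z, gauss (z - x) ∂ν)) :=
  stmt0_general ν hZ
end

section
/- Suppose real sequences (a_n) and (g_n) satisfy: a_n/n → ν as n → ∞, |a_{2n} − 2a_n| ≤ g_n for all sufficiently large n, and g_{2n}/g_n → ψ as n → ∞ with ψ < 2. Then for any c > 1/(2−ψ), the inequality |a_n − νn| ≤ c·g_n holds for all sufficiently large n (depending on c). -/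
/-!
Put `b n = a n - ν n`, so that `b n / n → 0` and `|b (2n) - 2 b n| ≤ g n` eventually.
Telescoping along `n, 2n, 4n, …` gives
`|b n - b (2ᵏ n) / 2ᵏ| ≤ ∑_{j<k} g (2ʲ n) / 2ʲ⁺¹`, and the last term `b (2ᵏ n) / 2ᵏ` tends to `0`.
For any `ρ ∈ (ψ, 2)` we eventually have `g (2m) ≤ ρ g m`, so the sum is dominated by the
geometric series `g n / 2 · ∑ (ρ/2)ʲ = g n / (2 - ρ)`; taking `ρ = 2 - 1/c` gives the bound `c g n`.
-/

open Filter Topology Finset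

section Doubling

variable {b g : ℕ → ℝ} {N n : ℕ}

lemma abs_sub_div_two_pow_le_sum (hb : ∀ m, N ≤ m → |b (2 * m) - 2 * b m| ≤ g m)
    (hn : N ≤ n) (k : ℕ) :
    |b n - b (2 ^ k * n) / 2 ^ k| ≤ ∑ j ∈ range k, g (2 ^ j * n) / 2 ^ (j + 1) := by
  induction k with
  | zero => simp
  | succ k ih =>
    have hm : N ≤ 2 ^ k * n := hn.trans (Nat.le_mul_of_pos_left n (by positivity))
    have hstep : |b (2 ^ k * n) / 2 ^ k - b (2 ^ (k + 1) * n) / 2 ^ (k + 1)|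
        ≤ g (2 ^ k * n) / 2 ^ (k + 1) := by
      have hsplit : b (2 ^ k * n) / 2 ^ k - b (2 ^ (k + 1) * n) / 2 ^ (k + 1)
          = -(b (2 * (2 ^ k * n)) - 2 * b (2 ^ k * n)) / 2 ^ (k + 1) := by
        rw [pow_succ, mul_comm (2 ^ k) 2, mul_assoc]
        field_simp
        ring
      rw [hsplit, abs_div, abs_neg, abs_of_pos (by positivity : (0 : ℝ) < 2 ^ (k + 1))]
      exact div_le_div_of_nonneg_right (hb _ hm) (by positivity)
    rw [sum_range_succ]
    calc |b n - b (2 ^ (k + 1) * n) / 2 ^ (k + 1)|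
        ≤ |b n - b (2 ^ k * n) / 2 ^ k|
          + |b (2 ^ k * n) / 2 ^ k - b (2 ^ (k + 1) * n) / 2 ^ (k + 1)| := abs_sub_le _ _ _
      _ ≤ _ := add_le_add ih hstep

lemma le_pow_mul_of_two_mul_le {ρ : ℝ} (hρ : 0 ≤ ρ) (hg : ∀ m, N ≤ m → g (2 * m) ≤ ρ * g m)
    (hn : N ≤ n) (k : ℕ) : g (2 ^ k * n) ≤ ρ ^ k * g n := by
  induction k with
  | zero => simp
  | succ k ih =>
    have hm : N ≤ 2 ^ k * n := hn.trans (Nat.le_mul_of_pos_left n (by positivity))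
    calc g (2 ^ (k + 1) * n) = g (2 * (2 ^ k * n)) := by rw [pow_succ, mul_comm _ 2, mul_assoc]
      _ ≤ ρ * g (2 ^ k * n) := hg _ hm
      _ ≤ ρ * (ρ ^ k * g n) := mul_le_mul_of_nonneg_left ih hρ
      _ = ρ ^ (k + 1) * g n := by ring

lemma sum_div_two_pow_le_div {ρ : ℝ} (hρ0 : 0 ≤ ρ) (hρ2 : ρ < 2)
    (hg : ∀ m, N ≤ m → g (2 * m) ≤ ρ * g m) (hgn : 0 ≤ g n) (hn : N ≤ n) (k : ℕ) :
    ∑ j ∈ range k, g (2 ^ j * n) / 2 ^ (j + 1) ≤ g n / (2 - ρ) := by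
  calc ∑ j ∈ range k, g (2 ^ j * n) / 2 ^ (j + 1)
      ≤ ∑ j ∈ range k, ρ ^ j * g n / 2 ^ (j + 1) := by
        gcongr with j
        exact le_pow_mul_of_two_mul_le hρ0 hg hn j
    _ = g n / 2 * ∑ j ∈ range k, (ρ / 2) ^ j := by
        rw [mul_sum]
        refine sum_congr rfl fun j _ => ?_
        rw [div_pow, pow_succ]
        field_simp
    _ ≤ g n / 2 * (1 / (1 - ρ / 2)) := by
        have hsum := geom_sum_Ico_le_of_lt_one (m := 0) (n := k) (x := ρ / 2) (by positivity)
          (by linarith)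
        rw [← range_eq_Ico, pow_zero] at hsum
        gcongr
    _ = g n / (2 - ρ) := by
        field_simp

lemma tendsto_div_two_pow_of_tendsto_div (hb : Tendsto (fun m : ℕ => b m / m) atTop (𝓝 0))
    (hn : 0 < n) : Tendsto (fun k : ℕ => b (2 ^ k * n) / 2 ^ k) atTop (𝓝 0) := by
  have hmul : Tendsto (fun k : ℕ => 2 ^ k * n) atTop atTop :=
    tendsto_atTop_mono (fun k => Nat.lt_two_pow_self.le.trans (Nat.le_mul_of_pos_right _ hn))
      tendsto_id
  have hlim := (hb.comp hmul).mul_const (n : ℝ)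
  rw [zero_mul] at hlim
  refine hlim.congr fun k => ?_
  simp only [Function.comp_apply, Nat.cast_mul, Nat.cast_pow, Nat.cast_ofNat]
  field_simp

lemma eventually_abs_le_div_of_doubling {ρ : ℝ} (hρ0 : 0 ≤ ρ) (hρ2 : ρ < 2)
    (hb : Tendsto (fun m : ℕ => b m / m) atTop (𝓝 0))
    (hdb : ∀ᶠ m in atTop, |b (2 * m) - 2 * b m| ≤ g m)
    (hdg : ∀ᶠ m in atTop, g (2 * m) ≤ ρ * g m) (hg : ∀ m, 0 ≤ g m) :
    ∀ᶠ n in atTop, |b n| ≤ g n / (2 - ρ) := by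
  obtain ⟨N, hN⟩ := eventually_atTop.mp (hdb.and hdg)
  filter_upwards [eventually_ge_atTop (max N 1)] with n hn
  have hNn : N ≤ n := le_of_max_le_left hn
  have hbound : ∀ k : ℕ, |b n| ≤ g n / (2 - ρ) + |b (2 ^ k * n) / 2 ^ k| := fun k =>
    calc |b n| ≤ |b n - b (2 ^ k * n) / 2 ^ k| + |b (2 ^ k * n) / 2 ^ k| := by
          simpa using abs_add_le (b n - b (2 ^ k * n) / 2 ^ k) (b (2 ^ k * n) / 2 ^ k)
      _ ≤ g n / (2 - ρ) + |b (2 ^ k * n) / 2 ^ k| := by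
        gcongr
        exact (abs_sub_div_two_pow_le_sum (fun m hm => (hN m hm).1) hNn k).trans
          (sum_div_two_pow_le_div hρ0 hρ2 (fun m hm => (hN m hm).2) (hg n) hNn k)
  have hlim : Tendsto (fun k : ℕ => g n / (2 - ρ) + |b (2 ^ k * n) / 2 ^ k|) atTop
      (𝓝 (g n / (2 - ρ))) := by
    simpa using (tendsto_div_two_pow_of_tendsto_div hb (le_of_max_le_right hn)).abs.const_add
      (g n / (2 - ρ))
  exact ge_of_tendsto' hlim hbound

end Doubling

theorem stmt2 (a g : ℕ → ℝ) (ν ψ : ℝ) (hg : ∀ n, 0 < g n)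
    (ha : Tendsto (fun n : ℕ => a n / n) atTop (𝓝 ν))
    (hdg : ∀ᶠ n in atTop, |a (2 * n) - 2 * a n| ≤ g n)
    (hψ : Tendsto (fun n : ℕ => g (2 * n) / g n) atTop (𝓝 ψ))
    (hψ2 : ψ < 2) :
    ∀ c : ℝ, 1 / (2 - ψ) < c → ∀ᶠ n in atTop, |a n - ν * n| ≤ c * g n := by
  intro c hc
  have hψ0 : 0 ≤ ψ := ge_of_tendsto' hψ fun n => (div_pos (hg _) (hg _)).le
  have hc0 : 0 < c := (one_div_pos.mpr (by linarith)).trans hc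
  have hψρ : ψ < 2 - 1 / c := by
    rw [div_lt_iff₀ (by linarith)] at hc
    rw [lt_sub_comm, div_lt_iff₀ hc0]
    linarith
  have hb : Tendsto (fun m : ℕ => (a m - ν * m) / m) atTop (𝓝 0) := by
    refine (sub_self ν ▸ ha.sub_const ν).congr' ?_
    filter_upwards [eventually_ne_atTop 0] with m hm
    field_simp
  have hdb : ∀ᶠ m in atTop, |(a (2 * m) - ν * ↑(2 * m)) - 2 * (a m - ν * m)| ≤ g m := by
    refine hdg.mono fun m hm => ?_
    convert hm using 2
    push_cast
    ring
  have hdg' : ∀ᶠ m in atTop, g (2 * m) ≤ (2 - 1 / c) * g m :=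
    (hψ.eventually_lt_const hψρ).mono fun m hm => ((div_lt_iff₀ (hg m)).mp hm).le
  filter_upwards [eventually_abs_le_div_of_doubling (hψ0.trans hψρ.le)
    (sub_lt_self 2 (one_div_pos.mpr hc0)) hb hdb hdg' fun m => (hg m).le] with n hn
  rwa [sub_sub_cancel, div_div_eq_mul_div, div_one, mul_comm (g n)] at hn
end
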